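/- arXiv:0708.1109 — 7 statements merged into one kernel-verified Lean document; each statement's English description precedes it below -/
import Mathlib

section
/- Let p, q, r be pairwise distinct indices and let u, v, w be complex variables with u = v + 1 or u = v - 1 (so f_{pq}(u,v) = 1 ∓ (p q)). Then the product f_{pq}(u,v)·f_{pr}(u,w)·f_{qr}(v,w), viewed as a rational function of w with u, v fixed, extends to a function regular (has a removable singularity) at w = u; indeed under u = v ± 1 it equals (1 ∓ (p q))·(1 - ((p r) + (q r))/(v - w)), which is regular at w = v ± 1. -/
/-- The rational function `f_{pq}(u,v) = 1 - (p q)/(u-v)` with values in the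
group algebra `ℂ[S_n]`, where `(p q)` is the transposition of `p` and `q`. -/
noncomputable def fusionF (n : ℕ) (p q : Fin n) (u v : ℂ) :
    MonoidAlgebra ℂ (Equiv.Perm (Fin n)) :=
  1 - (u - v)⁻¹ • MonoidAlgebra.of ℂ (Equiv.Perm (Fin n)) (Equiv.swap p q)

/-!
Write `S = (p q)`, `T = (p r)`, `K = (q r)` and `b = 1/(u-w)`, `c = 1/(v-w)`. Since
`T K = S T` and `S² = 1`, the factor `1 - εS` (with `ε² = 1`) absorbs `S` on the right:
`(1 - εS) S = -ε (1 - εS)`. Expanding `(1 - bT)(1 - cK)` therefore turns the quadratic term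
`bc S T` into `-ε bc T`, and the partial-fraction identity `b + ε b c = c`, which is
exactly `u = v + ε`, collapses the product to `(1 - εS)(1 - c(T + K))`.
-/

theorem Equiv.swap_mul_swap_eq_swap_mul_swap {α : Type*} [DecidableEq α] {p q r : α}
    (hpq : p ≠ q) (hqr : q ≠ r) :
    Equiv.swap p r * Equiv.swap q r = Equiv.swap p q * Equiv.swap p r := by
  rw [Equiv.swap_mul_eq_mul_swap (Equiv.swap p r) p q, Equiv.swap_inv, Equiv.swap_apply_left,
    Equiv.swap_apply_of_ne_of_ne hpq.symm hqr, Equiv.swap_comm r q]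

section Involution

variable {R A : Type*} [CommRing R] [Ring A] [Algebra R A] {S T K : A} {ε b c : R}

theorem one_sub_smul_mul_of_mul_self_eq_one (hS : S * S = 1) (hε : ε * ε = 1) :
    (1 - ε • S) * S = -ε • (1 - ε • S) := by
  rw [sub_mul, one_mul, smul_mul_assoc, hS]
  linear_combination (norm := module) (-hε) • S

theorem one_sub_smul_mul_one_sub_smul_mul_one_sub_smul (hS : S * S = 1) (hTK : T * K = S * T)
    (hε : ε * ε = 1) (hbc : b + ε * (b * c) = c) :
    (1 - ε • S) * (1 - b • T) * (1 - c • K) = (1 - ε • S) * (1 - c • (T + K)) := by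
  have hST : (1 - ε • S) * (S * T) = -ε • ((1 - ε • S) * T) := by
    rw [← mul_assoc, one_sub_smul_mul_of_mul_self_eq_one hS hε, smul_mul_assoc]
  have hexpand : (1 - b • T) * (1 - c • K) = 1 - b • T - c • K + (b * c) • (S * T) := by
    rw [← hTK]
    simp only [sub_mul, mul_sub, one_mul, mul_one, smul_mul_smul_comm]
    abel
  rw [mul_assoc, hexpand, mul_add, mul_smul_comm, hST]
  set X := 1 - ε • S
  simp only [mul_sub, mul_add, mul_one, mul_smul_comm, smul_add]
  linear_combination (norm := module) (-hbc) • (X * T)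

end Involution

theorem inv_sub_add_mul_inv_sub_mul_inv_sub {K : Type*} [Field K] {ε u v w : K}
    (hu : u = v + ε) (hwu : w ≠ u) (hwv : w ≠ v) :
    (u - w)⁻¹ + ε * ((u - w)⁻¹ * (v - w)⁻¹) = (v - w)⁻¹ := by
  have huw : u - w ≠ 0 := sub_ne_zero.mpr hwu.symm
  have hvw : v - w ≠ 0 := sub_ne_zero.mpr hwv.symm
  field_simp
  rw [hu]
  ring

theorem triple_regular_general (n : ℕ) (p q r : Fin n)
    (hpq : p ≠ q) (hqr : q ≠ r)
    (ε u v w : ℂ) (hε : ε = 1 ∨ ε = -1) (hu : u = v + ε)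
    (hwu : w ≠ u) (hwv : w ≠ v) :
    fusionF n p q u v * fusionF n p r u w * fusionF n q r v w
      = (1 - ε • MonoidAlgebra.of ℂ (Equiv.Perm (Fin n)) (Equiv.swap p q)) *
        (1 - (v - w)⁻¹ •
          (MonoidAlgebra.of ℂ (Equiv.Perm (Fin n)) (Equiv.swap p r) +
           MonoidAlgebra.of ℂ (Equiv.Perm (Fin n)) (Equiv.swap q r))) := by
  have hε2 : ε * ε = 1 := by rcases hε with rfl | rfl <;> norm_num
  have huv : (u - v)⁻¹ = ε := by
    rw [hu, add_sub_cancel_left, inv_eq_of_mul_eq_one_right hε2]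
  rw [fusionF, fusionF, fusionF, huv]
  refine one_sub_smul_mul_one_sub_smul_mul_one_sub_smul ?_ ?_ hε2
    (inv_sub_add_mul_inv_sub_mul_inv_sub hu hwu hwv)
  · rw [← map_mul, Equiv.swap_mul_self, map_one]
  · rw [← map_mul, ← map_mul, Equiv.swap_mul_swap_eq_swap_mul_swap hpq hqr]

/-- Under the condition `u = v ± 1` (so that `f_{pq}(u,v) = 1 ∓ (p q)`), the triple
product `f_{pq}(u,v)·f_{pr}(u,w)·f_{qr}(v,w)` equals
`(1 ∓ (p q))·(1 - ((p r) + (q r))/(v - w))`, which as a rational function of `w`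
is regular at `w = u` (the singularity there is removable). -/
theorem triple_regular (n : ℕ) (p q r : Fin n)
    (hpq : p ≠ q) (hpr : p ≠ r) (hqr : q ≠ r)
    (ε u v w : ℂ) (hε : ε = 1 ∨ ε = -1) (hu : u = v + ε)
    (hwu : w ≠ u) (hwv : w ≠ v) :
    fusionF n p q u v * fusionF n p r u w * fusionF n q r v w
      = (1 - ε • MonoidAlgebra.of ℂ (Equiv.Perm (Fin n)) (Equiv.swap p q)) *
        (1 - (v - w)⁻¹ •
          (MonoidAlgebra.of ℂ (Equiv.Perm (Fin n)) (Equiv.swap p r) +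
           MonoidAlgebra.of ℂ (Equiv.Perm (Fin n)) (Equiv.swap q r))) :=
  triple_regular_general n p q r hpq hqr ε u v w hε hu hwu hwv
end

section
/- For each i = 1, ..., n-1 and nonzero a, b ∈ ℂ(q) with a ≠ b, define F_i(a,b) = T_i + (q - q⁻¹)/(a⁻¹b - 1) in the Hecke algebra H_n. Then the braid-type Yang–Baxter relation holds: F_i(a,b)·F_{i+1}(a,c)·F_i(b,c) = F_{i+1}(b,c)·F_i(a,c)·F_{i+1}(a,b), for pairwise distinct nonzero a, b, c. -/
/-!
Writing `δ = q - q⁻¹`, the quadratic relation says `T_j² = δ T_j + 1`. Expanding both sides of the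
Yang–Baxter relation with this and the braid relation, they differ by
`(αγ - β(δ + γ + α)) (T_{i+1} - T_i)`, where `α, β, γ` are the scalar parts of the three factors
on the left. Each scalar has the form
`δ / (r - 1)` for a ratio `r` of spectral parameters, and the three ratios satisfy
`(a⁻¹b)(b⁻¹c) = a⁻¹c`; this multiplicativity is exactly what makes the scalar factor vanish.
-/

open RatFunc

/-- The function `F_i(a,b) = T_i + (q - q⁻¹)/(a⁻¹b - 1)` with values in the Hecke
algebra, for nonzero `a ≠ b` in `ℂ(q)`. -/
noncomputable def heckeF {H : Type*} [Ring H] [Algebra (RatFunc ℂ) H]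
    (T : ℕ → H) (i : ℕ) (a b : RatFunc ℂ) : H :=
  T i + algebraMap (RatFunc ℂ) H ((X - X⁻¹) / (a⁻¹ * b - 1))

section YangBaxter

variable {R A : Type*} [CommRing R] [Ring A] [Algebra R A]

theorem mul_self_eq_of_quadratic_relation {t : A} {x y : R}
    (h : (t - algebraMap R A x) * (t + algebraMap R A y) = 0) :
    t * t = (x - y) • t + algebraMap R A (x * y) := by
  have expand : (t - algebraMap R A x) * (t + algebraMap R A y)
      = t * t - ((x - y) • t + algebraMap R A (x * y)) := by
    simp only [Algebra.algebraMap_eq_smul_one, sub_mul, mul_add, smul_mul_assoc, mul_smul_comm,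
      one_mul, mul_one]
    module
  rwa [expand, sub_eq_zero] at h

theorem triple_product_expand {u : A} {δ : R} (hu : u * u = δ • u + 1) (v : A) (α β γ : R) :
    (u + α • 1) * (v + β • 1) * (u + γ • 1)
      = u * v * u + γ • (u * v) + α • (v * u) + (β * δ + β * γ + α * β) • u + (α * γ) • v
        + (β + α * β * γ) • 1 := by
  simp only [add_mul, mul_add, smul_mul_assoc, mul_smul_comm, one_mul, mul_one, hu]
  module

theorem yang_baxter_of_braid {u v : A} {δ : R} (hu : u * u = δ • u + 1)
    (hv : v * v = δ • v + 1) (hbraid : u * v * u = v * u * v) {α β γ : R}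
    (h : α * γ = β * (δ + γ + α)) :
    (u + algebraMap R A α) * (v + algebraMap R A β) * (u + algebraMap R A γ)
      = (v + algebraMap R A γ) * (u + algebraMap R A β) * (v + algebraMap R A α) := by
  simp only [Algebra.algebraMap_eq_smul_one]
  rw [triple_product_expand hu, triple_product_expand hv, hbraid]
  linear_combination (norm := module) h • (v - u)

end YangBaxter

theorem yang_baxter_weight_identity {K : Type*} [Field K] (δ : K) {r s t : K} (hrs : r * s = t)
    (hr : r ≠ 1) (hs : s ≠ 1) (ht : t ≠ 1) :
    δ / (r - 1) * (δ / (s - 1)) = δ / (t - 1) * (δ + δ / (s - 1) + δ / (r - 1)) := by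
  have hr' : r - 1 ≠ 0 := sub_ne_zero.mpr hr
  have hs' : s - 1 ≠ 0 := sub_ne_zero.mpr hs
  have ht' : t - 1 ≠ 0 := sub_ne_zero.mpr ht
  subst hrs
  field_simp
  ring

theorem inv_mul_ne_one_of_ne {G₀ : Type*} [GroupWithZero G₀] {a b : G₀} (h : a ≠ b) :
    a⁻¹ * b ≠ 1 := fun h' =>
  h ((inv_mul_eq_one₀ (by simpa using left_ne_zero_of_mul_eq_one h')).mp h')

theorem hecke_yang_baxter_general (n : ℕ) (H : Type*) [Ring H]
    [Algebra (RatFunc ℂ) H] (T : ℕ → H)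
    (hquad : ∀ i, 1 ≤ i → i < n →
      (T i - algebraMap (RatFunc ℂ) H X) * (T i + algebraMap (RatFunc ℂ) H X⁻¹) = 0)
    (hbraid : ∀ i, 1 ≤ i → i + 1 < n →
      T i * T (i + 1) * T i = T (i + 1) * T i * T (i + 1))
    (i : ℕ) (hi : 1 ≤ i) (hi' : i + 1 < n)
    (a b c : RatFunc ℂ) (hb : b ≠ 0)
    (hab : a ≠ b) (hac : a ≠ c) (hbc : b ≠ c) :
    heckeF T i a b * heckeF T (i + 1) a c * heckeF T i b c =
      heckeF T (i + 1) b c * heckeF T i a c * heckeF T (i + 1) a b := by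
  have hsq : ∀ j, 1 ≤ j → j < n → T j * T j = (X - X⁻¹) • T j + 1 := fun j hj hjn => by
    have hX : (X : RatFunc ℂ) * X⁻¹ = 1 := mul_inv_cancel₀ X_ne_zero
    simpa only [hX, map_one] using mul_self_eq_of_quadratic_relation (hquad j hj hjn)
  have hratio : a⁻¹ * b * (b⁻¹ * c) = a⁻¹ * c := by rw [mul_assoc, mul_inv_cancel_left₀ hb]
  refine yang_baxter_of_braid (hsq i hi (by omega)) (hsq (i + 1) (by omega) hi')
    (hbraid i hi hi') ?_
  exact yang_baxter_weight_identity _ hratio (inv_mul_ne_one_of_ne hab)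
    (inv_mul_ne_one_of_ne hbc) (inv_mul_ne_one_of_ne hac)

/-- In the Hecke algebra `H_n` the braid-type Yang–Baxter relation
`F_i(a,b)·F_{i+1}(a,c)·F_i(b,c) = F_{i+1}(b,c)·F_i(a,c)·F_{i+1}(a,b)` holds for
pairwise distinct nonzero `a, b, c ∈ ℂ(q)`. -/
theorem hecke_yang_baxter (n : ℕ) (H : Type*) [Ring H]
    [Algebra (RatFunc ℂ) H] (T : ℕ → H)
    (hquad : ∀ i, 1 ≤ i → i < n →
      (T i - algebraMap (RatFunc ℂ) H X) * (T i + algebraMap (RatFunc ℂ) H X⁻¹) = 0)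
    (hbraid : ∀ i, 1 ≤ i → i + 1 < n →
      T i * T (i + 1) * T i = T (i + 1) * T i * T (i + 1))
    (hcomm : ∀ i j, 1 ≤ i → i < n → j < n → i + 1 < j → T i * T j = T j * T i)
    (i : ℕ) (hi : 1 ≤ i) (hi' : i + 1 < n)
    (a b c : RatFunc ℂ) (ha : a ≠ 0) (hb : b ≠ 0) (hc : c ≠ 0)
    (hab : a ≠ b) (hac : a ≠ c) (hbc : b ≠ c) :
    heckeF T i a b * heckeF T (i + 1) a c * heckeF T i b c =
      heckeF T (i + 1) b c * heckeF T i a c * heckeF T (i + 1) a b :=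
  hecke_yang_baxter_general n H T hquad hbraid i hi hi' a b c hb hab hac hbc
end

section
/- In the Hecke algebra H_n, for nonzero a ≠ b in ℂ(q), F_i(a,b)·F_i(b,a) = 1 - (q - q⁻¹)²·ab/(a - b)², where F_i(a,b) = T_i + (q - q⁻¹)/(a⁻¹b - 1). -/
open RatFunc

section Scalars

variable {K : Type*} [Field K] {a b : K}

lemma div_inv_mul_sub_one (c : K) (ha : a ≠ 0) (hab : a ≠ b) :
    c / (a⁻¹ * b - 1) = c * a / (b - a) := by
  have hba : b - a ≠ 0 := sub_ne_zero.mpr hab.symm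
  rw [show a⁻¹ * b - 1 = (b - a) / a by field_simp]
  field_simp

lemma div_inv_mul_sub_one_add_swap (c : K) (ha : a ≠ 0) (hb : b ≠ 0) (hab : a ≠ b) :
    c / (a⁻¹ * b - 1) + c / (b⁻¹ * a - 1) = -c := by
  rw [div_inv_mul_sub_one c ha hab, div_inv_mul_sub_one c hb hab.symm]
  field_simp
  ring

lemma div_inv_mul_sub_one_mul_swap (c : K) (ha : a ≠ 0) (hb : b ≠ 0) (hab : a ≠ b) :
    c / (a⁻¹ * b - 1) * (c / (b⁻¹ * a - 1)) = -(c ^ 2 * a * b / (a - b) ^ 2) := by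
  rw [div_inv_mul_sub_one c ha hab, div_inv_mul_sub_one c hb hab.symm]
  field_simp
  ring

end Scalars

section Algebra

variable {K H : Type*} [Field K] [Ring H] [Algebra K H]

lemma mul_self_eq_of_quadratic {t : H} {q : K} (hq : q ≠ 0)
    (h : (t - algebraMap K H q) * (t + algebraMap K H q⁻¹) = 0) :
    t * t = algebraMap K H (q - q⁻¹) * t + 1 := by
  have hinv : algebraMap K H q * algebraMap K H q⁻¹ = 1 := by
    rw [← map_mul, mul_inv_cancel₀ hq, map_one]
  rw [← sub_eq_zero, ← h, map_sub, sub_mul, Algebra.commutes q⁻¹ t, ← hinv]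
  noncomm_ring

lemma add_algebraMap_mul_add_algebraMap {t : H} {c : K} (ht : t * t = algebraMap K H c * t + 1)
    {u v : K} (huv : u + v = -c) :
    (t + algebraMap K H u) * (t + algebraMap K H v) = 1 + algebraMap K H (u * v) := by
  have expand : (t + algebraMap K H u) * (t + algebraMap K H v) =
      t * t + algebraMap K H (u + v) * t + algebraMap K H (u * v) := by
    rw [map_add, map_mul, add_mul, mul_add, mul_add, ← Algebra.commutes v t, add_mul]
    abel
  rw [expand, ht, huv, map_neg, neg_mul]
  abel

end Algebra

theorem hecke_fusion_inverse_general (n : ℕ) (H : Type*) [Ring H]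
    [Algebra (RatFunc ℂ) H] (T : ℕ → H)
    (hquad : ∀ i, 1 ≤ i → i < n →
      (T i - algebraMap (RatFunc ℂ) H X) * (T i + algebraMap (RatFunc ℂ) H X⁻¹) = 0)
    (i : ℕ) (hi : 1 ≤ i) (hi' : i < n)
    (a b : RatFunc ℂ) (ha : a ≠ 0) (hb : b ≠ 0) (hab : a ≠ b) :
    heckeF T i a b * heckeF T i b a =
      1 - algebraMap (RatFunc ℂ) H ((X - X⁻¹) ^ 2 * a * b / (a - b) ^ 2) := by
  have hT := mul_self_eq_of_quadratic RatFunc.X_ne_zero (hquad i hi hi')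
  rw [heckeF, heckeF, add_algebraMap_mul_add_algebraMap hT
    (div_inv_mul_sub_one_add_swap _ ha hb hab), div_inv_mul_sub_one_mul_swap _ ha hb hab,
    map_neg, ← sub_eq_add_neg]

/-- In the Hecke algebra `H_n`, for nonzero `a ≠ b` in `ℂ(q)`,
`F_i(a,b)·F_i(b,a) = 1 - (q - q⁻¹)²·ab/(a - b)²`. -/
theorem hecke_fusion_inverse (n : ℕ) (H : Type*) [Ring H]
    [Algebra (RatFunc ℂ) H] (T : ℕ → H)
    (hquad : ∀ i, 1 ≤ i → i < n →
      (T i - algebraMap (RatFunc ℂ) H X) * (T i + algebraMap (RatFunc ℂ) H X⁻¹) = 0)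
    (hbraid : ∀ i, 1 ≤ i → i + 1 < n →
      T i * T (i + 1) * T i = T (i + 1) * T i * T (i + 1))
    (hcomm : ∀ i j, 1 ≤ i → i < n → j < n → i + 1 < j → T i * T j = T j * T i)
    (i : ℕ) (hi : 1 ≤ i) (hi' : i < n)
    (a b : RatFunc ℂ) (ha : a ≠ 0) (hb : b ≠ 0) (hab : a ≠ b) :
    heckeF T i a b * heckeF T i b a =
      1 - algebraMap (RatFunc ℂ) H ((X - X⁻¹) ^ 2 * a * b / (a - b) ^ 2) :=
  hecke_fusion_inverse_general n H T hquad i hi hi' a b ha hb hab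
end

section
/- Let λ be a partition of n, Λ a standard Young tableau of shape λ, P_Λ the sum of all permutations preserving each row of Λ and Q_Λ the signed sum of all permutations preserving each column of Λ. Then the Young symmetrizer Y_Λ = P_Λ Q_Λ satisfies Y_Λ² = α_Λ · Y_Λ for some positive rational number α_Λ. -/
/-- The row symmetrizer `P_Λ = Σ_{p ∈ R(Λ)} p` of a Young tableau `Λ`, encoded by
the bijection `e` sending an entry to its cell: the sum of all permutations of the
entries preserving the row of each entry. -/
noncomputable def rowSymmetrizer (n : ℕ) (μ : YoungDiagram)
    (e : Fin n ≃ {c // c ∈ μ.cells}) : MonoidAlgebra ℂ (Equiv.Perm (Fin n)) :=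
  ∑ σ ∈ Finset.univ.filter
      (fun σ : Equiv.Perm (Fin n) => ∀ k, ((e (σ k) : ℕ × ℕ)).1 = ((e k : ℕ × ℕ)).1),
    MonoidAlgebra.of ℂ (Equiv.Perm (Fin n)) σ

/-- The column antisymmetrizer `Q_Λ = Σ_{q ∈ C(Λ)} (sgn q)·q` of a Young tableau
`Λ`: the signed sum of all permutations of the entries preserving the column of
each entry. -/
noncomputable def colSymmetrizer (n : ℕ) (μ : YoungDiagram)
    (e : Fin n ≃ {c // c ∈ μ.cells}) : MonoidAlgebra ℂ (Equiv.Perm (Fin n)) :=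
  ∑ σ ∈ Finset.univ.filter
      (fun σ : Equiv.Perm (Fin n) => ∀ k, ((e (σ k) : ℕ × ℕ)).2 = ((e k : ℕ × ℕ)).2),
    ((Equiv.Perm.sign σ : ℤ) : ℂ) • MonoidAlgebra.of ℂ (Equiv.Perm (Fin n)) σ

/-!
Von Neumann's sandwich argument. Let `R` and `C` be the row and column groups. An element `a` of
the group algebra with `p * a * q = sgn q • a` for all `p ∈ R`, `q ∈ C` is a multiple of `Y`:
since `R ∩ C = 1`, its coefficient at `p * q` is `sgn q * a 1`, and for `σ ∉ R * C` there is a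
transposition `t ∈ R` with `σ⁻¹ t σ ∈ C`, which forces `a σ = -a σ`. Such a `t` exists because
otherwise no two entries of a row of `Λ` share a column of `σ Λ`; counting cells row by row,
putting each entry in its row of `Λ` and its column of `σ Λ` then fills the diagram, which
writes `σ = p q`.
As `Y² = P (Q P) Q`, this gives `Y² = β Y`. Right multiplication by `Y` is then `β` times an
idempotent, so its trace `n! * Y(1) = n!` is `β` times its rank, and `β = n! / rank > 0`.
-/

open Finset MonoidAlgebra
open scoped Pointwise

namespace LinearMap

theorem trace_eq_mul_finrank_range_of_mul_self_eq_smul {K V : Type*} [Field K] [AddCommGroup V]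
    [Module K V] [FiniteDimensional K V] {T : Module.End K V} {β : K} (h : T * T = β • T) :
    trace K V T = β * Module.finrank K (range T) := by
  rcases eq_or_ne β 0 with rfl | hβ
  · have hT : IsNilpotent T := ⟨2, by rw [sq, h, zero_smul]⟩
    simp [(isNilpotent_trace_of_isNilpotent hT).eq_zero]
  · have hE : IsIdempotentElem (β⁻¹ • T) := by
      rw [IsIdempotentElem, smul_mul_smul_comm, h, smul_smul]
      congr 1
      field_simp
    calc trace K V T = β * trace K V (β⁻¹ • T) := by
          rw [map_smul, smul_eq_mul, mul_inv_cancel_left₀ hβ]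
      _ = β * Module.finrank K (range T) := by
          rw [(IsIdempotentElem.isProj_range _ hE).trace, range_smul T _ (inv_ne_zero hβ)]

end LinearMap

namespace MonoidAlgebra

variable {k G : Type*}

theorem trace_mulRight [CommRing k] [Group G] [Fintype G] (a : MonoidAlgebra k G) :
    LinearMap.trace k (MonoidAlgebra k G) (LinearMap.mulRight k a) =
      Fintype.card G * a.coeff 1 := by
  classical
  rw [LinearMap.trace_eq_matrix_trace k (basis G k), Matrix.trace]
  have hdiag (g : G) :
      LinearMap.toMatrix (basis G k) (basis G k) (LinearMap.mulRight k a) g g = a.coeff 1 := by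
    rw [LinearMap.toMatrix_apply]
    change (single g 1 * a).coeff g = a.coeff 1
    rw [coeff_single_mul_apply, inv_mul_cancel, one_mul]
  simp only [Matrix.diag_apply, hdiag, sum_const, card_univ, nsmul_eq_mul]

section Symmetrizers

variable (k) [CommRing k] [Group G] (R C : Subgroup G) [Fintype R] [Fintype C] (χ : G →* ℤˣ)

noncomputable def symmetrizer : MonoidAlgebra k G := ∑ p : R, of k G p

noncomputable def antisymmetrizer : MonoidAlgebra k G := ∑ q : C, ((χ q : ℤ) : k) • of k G q

noncomputable def youngSymmetrizer : MonoidAlgebra k G :=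
  symmetrizer k R * antisymmetrizer k C χ

variable {k R C χ}

theorem of_mul_symmetrizer {p : G} (hp : p ∈ R) :
    of k G p * symmetrizer k R = symmetrizer k R := by
  simp only [symmetrizer, mul_sum, ← map_mul]
  exact Fintype.sum_equiv (Equiv.mulLeft ⟨p, hp⟩) _ _ fun _ => rfl

theorem antisymmetrizer_mul_of {q : G} (hq : q ∈ C) :
    antisymmetrizer k C χ * of k G q = ((χ q : ℤ) : k) • antisymmetrizer k C χ := by
  simp only [antisymmetrizer, sum_mul, smul_sum, smul_mul_assoc, ← map_mul, smul_smul]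
  refine Fintype.sum_equiv (Equiv.mulRight ⟨q, hq⟩) _ _ fun c => ?_
  simp only [Equiv.coe_mulRight, Subgroup.coe_mul, map_mul, Units.val_mul, Int.cast_mul]
  rw [mul_left_comm, ← Int.cast_mul, ← Units.val_mul, Int.units_mul_self, Units.val_one,
    Int.cast_one, mul_one]

theorem youngSymmetrizer_eq_sum : youngSymmetrizer k R C χ =
    ∑ x : R × C, ((χ x.2 : ℤ) : k) • of k G (x.1 * x.2) := by
  simp only [youngSymmetrizer, symmetrizer, antisymmetrizer, sum_mul_sum, mul_smul_comm,
    ← map_mul, ← Fintype.sum_prod_type']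

theorem coeff_youngSymmetrizer [DecidableEq G] (σ : G) : (youngSymmetrizer k R C χ).coeff σ =
    ∑ x : R × C, if (x.1 * x.2 : G) = σ then ((χ x.2 : ℤ) : k) else 0 := by
  simp only [youngSymmetrizer_eq_sum, coeff_sum, Finsupp.finsetSum_apply, coeff_smul,
    Finsupp.smul_apply, of_apply, coeff_single, Finsupp.single_apply, smul_eq_mul, mul_ite,
    mul_one, mul_zero]

theorem coeff_youngSymmetrizer_mul (hRC : Disjoint R C) {p q : G} (hp : p ∈ R) (hq : q ∈ C) :
    (youngSymmetrizer k R C χ).coeff (p * q) = χ q := by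
  classical
  rw [coeff_youngSymmetrizer, Fintype.sum_eq_single (⟨p, hp⟩, ⟨q, hq⟩)]
  · simp
  · exact fun x hx => if_neg fun h => hx (Subgroup.mul_injective_of_disjoint hRC h)

theorem coeff_youngSymmetrizer_eq_zero {σ : G} (hσ : σ ∉ (R : Set G) * (C : Set G)) :
    (youngSymmetrizer k R C χ).coeff σ = 0 := by
  classical
  rw [coeff_youngSymmetrizer]
  refine sum_eq_zero fun x _ => if_neg fun h => hσ ?_
  exact h ▸ Set.mul_mem_mul x.1.2 x.2.2

theorem coeff_one_youngSymmetrizer (hRC : Disjoint R C) :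
    (youngSymmetrizer k R C χ).coeff 1 = 1 := by
  simpa using coeff_youngSymmetrizer_mul (χ := χ) (k := k) hRC R.one_mem C.one_mem

theorem coeff_of_mul_mul_of (a : MonoidAlgebra k G) (g h x : G) :
    (of k G g * a * of k G h).coeff x = a.coeff (g⁻¹ * x * h⁻¹) := by
  rw [of_apply, of_apply, coeff_mul_single_apply, coeff_single_mul_apply, one_mul, mul_one,
    mul_assoc]

variable [NoZeroDivisors k] [CharZero k]

theorem eq_coeff_one_smul_youngSymmetrizer (hRC : Disjoint R C)
    (hswap : ∀ σ ∉ (R : Set G) * (C : Set G),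
      ∃ t ∈ R, σ⁻¹ * t * σ ∈ C ∧ χ t = -1)
    {a : MonoidAlgebra k G}
    (ha : ∀ p ∈ R, ∀ q ∈ C, of k G p * a * of k G q = ((χ q : ℤ) : k) • a) :
    a = a.coeff 1 • youngSymmetrizer k R C χ := by
  ext σ
  rw [coeff_smul, Finsupp.smul_apply, smul_eq_mul]
  by_cases hσ : σ ∈ (R : Set G) * (C : Set G)
  · obtain ⟨p, hp, q, hq, rfl⟩ := hσ
    have h := congr($(ha p⁻¹ (R.inv_mem hp) q⁻¹ (C.inv_mem hq)).coeff 1)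
    rw [coeff_of_mul_mul_of, coeff_smul, Finsupp.smul_apply, map_inv, Int.units_inv_eq_self,
      inv_inv, inv_inv, mul_one] at h
    rw [h, coeff_youngSymmetrizer_mul hRC hp hq, smul_eq_mul, mul_comm]
  · -- `t σ u⁻¹ = σ` for `u = σ⁻¹ t σ`, and `χ u = -1`
    obtain ⟨t, ht, hu, hχ⟩ := hswap σ hσ
    have hχu : χ (σ⁻¹ * t * σ) = -1 := by
      rw [map_mul, map_mul, mul_comm (χ σ⁻¹), mul_assoc, ← map_mul, inv_mul_cancel, map_one,
        mul_one, hχ]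
    have h := congr($(ha t⁻¹ (R.inv_mem ht) _ hu).coeff σ)
    rw [coeff_of_mul_mul_of, coeff_smul, Finsupp.smul_apply, hχu] at h
    simp only [inv_inv, mul_inv_rev, mul_assoc, mul_inv_cancel_left, Units.val_neg,
      Units.val_one, Int.cast_neg, Int.cast_one, neg_smul, one_smul, CharZero.eq_neg_self_iff] at h
    rw [h, coeff_youngSymmetrizer_eq_zero hσ, mul_zero]

theorem symmetrizer_mul_mul_antisymmetrizer (hRC : Disjoint R C)
    (hswap : ∀ σ ∉ (R : Set G) * (C : Set G),
      ∃ t ∈ R, σ⁻¹ * t * σ ∈ C ∧ χ t = -1)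
    (x : MonoidAlgebra k G) :
    symmetrizer k R * x * antisymmetrizer k C χ =
      (symmetrizer k R * x * antisymmetrizer k C χ).coeff 1 • youngSymmetrizer k R C χ := by
  refine eq_coeff_one_smul_youngSymmetrizer hRC hswap fun p hp q hq => ?_
  rw [← mul_assoc, ← mul_assoc, of_mul_symmetrizer hp, mul_assoc, antisymmetrizer_mul_of hq,
    mul_smul_comm]

theorem youngSymmetrizer_mul_self (hRC : Disjoint R C)
    (hswap : ∀ σ ∉ (R : Set G) * (C : Set G),
      ∃ t ∈ R, σ⁻¹ * t * σ ∈ C ∧ χ t = -1) :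
    youngSymmetrizer k R C χ * youngSymmetrizer k R C χ =
      (youngSymmetrizer k R C χ * youngSymmetrizer k R C χ).coeff 1 •
        youngSymmetrizer k R C χ := by
  have h : youngSymmetrizer k R C χ * youngSymmetrizer k R C χ =
      symmetrizer k R * (antisymmetrizer k C χ * symmetrizer k R) * antisymmetrizer k C χ := by
    simp only [youngSymmetrizer, mul_assoc]
  rw [h]
  exact symmetrizer_mul_mul_antisymmetrizer hRC hswap _

end Symmetrizers

theorem exists_pos_rat_eq_of_mul_self_eq_smul {K : Type*} [Field K] [CharZero K] [Group G]
    [Fintype G] {Y : MonoidAlgebra K G} {β : K} (hY : Y.coeff 1 = 1) (h : Y * Y = β • Y) :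
    ∃ α : ℚ, 0 < α ∧ β = α := by
  set T := LinearMap.mulRight K Y
  have hT : T * T = β • T := LinearMap.ext fun x => by
    simp only [T, Module.End.mul_apply, LinearMap.mulRight_apply, LinearMap.smul_apply,
      mul_assoc, h, mul_smul_comm]
  have htrace := LinearMap.trace_eq_mul_finrank_range_of_mul_self_eq_smul hT
  rw [trace_mulRight, hY, mul_one] at htrace
  have hm : Module.finrank K (LinearMap.range T) ≠ 0 := by
    rintro hm
    rw [hm, Nat.cast_zero, mul_zero, Nat.cast_eq_zero] at htrace
    exact Fintype.card_ne_zero htrace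
  refine ⟨Fintype.card G / Module.finrank K (LinearMap.range T), by positivity, ?_⟩
  rw [Rat.cast_div, Rat.cast_natCast, Rat.cast_natCast, htrace,
    mul_div_cancel_right₀ _ (Nat.cast_ne_zero.2 hm)]

end MonoidAlgebra

namespace Equiv.Perm

variable {ι β γ : Type*}

def fiberStabilizer (f : ι → β) : Subgroup (Perm ι) where
  carrier := {σ | ∀ x, f (σ x) = f x}
  one_mem' _ := rfl
  mul_mem' hσ hτ x := (hσ _).trans (hτ x)
  inv_mem' {σ} hσ x := by simpa using (hσ (σ⁻¹ x)).symm

@[simp]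
theorem mem_fiberStabilizer {f : ι → β} {σ : Perm ι} :
    σ ∈ fiberStabilizer f ↔ ∀ x, f (σ x) = f x :=
  Iff.rfl

theorem swap_mem_fiberStabilizer [DecidableEq ι] {f : ι → β} {x y : ι} (h : f x = f y) :
    swap x y ∈ fiberStabilizer f := fun z => by
  rcases eq_or_ne z x with rfl | hzx
  · rw [swap_apply_left, h]
  rcases eq_or_ne z y with rfl | hzy
  · rw [swap_apply_right, h]
  · rw [swap_apply_of_ne_of_ne hzx hzy]

theorem disjoint_fiberStabilizer {f : ι → β} {g : ι → γ}
    (h : Function.Injective fun x => (f x, g x)) :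
    _root_.Disjoint (fiberStabilizer f) (fiberStabilizer g) :=
  Subgroup.disjoint_def.2 fun hf hg => Perm.ext fun x => h (Prod.ext (hf x) (hg x))

end Equiv.Perm

theorem Finset.card_filter_equiv {ι α : Type*} [Fintype ι] {s : Finset α} (e : ι ≃ s)
    (P : α → Prop) [DecidablePred P] : #{k | P (e k)} = #{c ∈ s | P c} := by
  rw [card_equiv e (t := univ.filter fun c : s => P c) (by simp), univ_eq_attach, filter_attach,
    card_map, card_attach]

namespace YoungDiagram

variable (μ : YoungDiagram)

theorem card_cells_filter_fst_lt_snd_eq (i j : ℕ) :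
    #{c ∈ μ.cells | c.1 < i ∧ c.2 = j} = min i (μ.colLen j) := by
  have h : ({c ∈ μ.cells | c.1 < i ∧ c.2 = j} : Finset (ℕ × ℕ)) =
      range (min i (μ.colLen j)) ×ˢ {j} := by
    ext ⟨a, b⟩
    simp only [mem_filter, mem_cells, mem_product, mem_range, mem_singleton, lt_min_iff]
    constructor
    · rintro ⟨hab, ha, rfl⟩
      exact ⟨⟨ha, mem_iff_lt_colLen.1 hab⟩, rfl⟩
    · rintro ⟨⟨ha, hab⟩, rfl⟩
      exact ⟨mem_iff_lt_colLen.2 hab, ha, rfl⟩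
  rw [h, card_product, card_range, card_singleton, mul_one]

theorem card_cells_filter_fst_lt (i : ℕ) :
    #{c ∈ μ.cells | c.1 < i} = ∑ j ∈ range (μ.rowLen 0), min i (μ.colLen j) := by
  rw [card_eq_sum_card_fiberwise (f := Prod.snd) (t := range (μ.rowLen 0)) fun c hc => ?_]
  · simp_rw [filter_filter]
    exact sum_congr rfl fun j _ => μ.card_cells_filter_fst_lt_snd_eq i j
  · have hc : c ∈ μ := (mem_filter.1 hc).1
    exact mem_range.2 (mem_iff_lt_rowLen.1 (μ.up_left_mem c.1.zero_le le_rfl hc))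

theorem mem_of_injective {ι : Type*} [Fintype ι] {φ : ι → ℕ × ℕ} (hφ : Function.Injective φ)
    (hrow : ∀ i, #{k | (φ k).1 < i} = #{c ∈ μ.cells | c.1 < i})
    (hcol : ∀ j, #{k | (φ k).2 = j} = μ.colLen j) (k : ι) : φ k ∈ μ := by
  classical
  -- `N i j ≤ min i (colLen j)`, and summing over `j` both sides count the cells above row `i`
  let N (i j : ℕ) := #{k | (φ k).1 < i ∧ (φ k).2 = j}
  have hle (i j : ℕ) : N i j ≤ min i (μ.colLen j) := by
    refine le_min ?_ ((card_le_card (monotone_filter_right _ fun _ _ hk => hk.2)).trans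
      (hcol j).le)
    simpa using card_le_card_of_injOn (fun k => (φ k).1) (t := range i)
      (fun k hk => by simpa using (mem_filter.1 hk).2.1)
      fun a ha b hb hab => hφ (Prod.ext hab
        ((mem_filter.1 ha).2.2.trans (mem_filter.1 hb).2.2.symm))
  have hwidth (k : ι) : (φ k).2 < μ.rowLen 0 := by
    have hpos : 0 < μ.colLen (φ k).2 := hcol _ ▸ card_pos.2 ⟨k, by simp⟩
    exact mem_iff_lt_rowLen.1 (mem_iff_lt_colLen.2 hpos)
  have hN (i : ℕ) {j : ℕ} (hj : j < μ.rowLen 0) : N i j = min i (μ.colLen j) := by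
    refine (sum_eq_sum_iff_of_le fun j _ => hle i j).1 ?_ j (mem_range.2 hj)
    rw [← card_cells_filter_fst_lt, ← hrow,
      card_eq_sum_card_fiberwise fun k _ => mem_range.2 (hwidth k)]
    simp_rw [filter_filter, N]
  have hlt : N (φ k).1 (φ k).2 < N ((φ k).1 + 1) (φ k).2 :=
    card_lt_card ((ssubset_iff_of_subset
      (monotone_filter_right _ fun _ _ h => ⟨by omega, h.2⟩)).2 ⟨k, by simp, by simp⟩)
  rw [hN _ (hwidth k), hN _ (hwidth k)] at hlt
  rw [← Prod.mk.eta (p := φ k), mem_iff_lt_colLen]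
  omega

variable {μ} {ι : Type*}

def rowGroup (e : ι ≃ μ.cells) : Subgroup (Equiv.Perm ι) :=
  Equiv.Perm.fiberStabilizer fun k => (e k : ℕ × ℕ).1

def colGroup (e : ι ≃ μ.cells) : Subgroup (Equiv.Perm ι) :=
  Equiv.Perm.fiberStabilizer fun k => (e k : ℕ × ℕ).2

theorem disjoint_rowGroup_colGroup (e : ι ≃ μ.cells) : Disjoint (rowGroup e) (colGroup e) :=
  Equiv.Perm.disjoint_fiberStabilizer fun _ _ h => e.injective (Subtype.ext h)

theorem mem_rowGroup_mul_colGroup_of_injective [Fintype ι] (e : ι ≃ μ.cells)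
    {σ : Equiv.Perm ι}
    (h : Function.Injective fun k => ((e k : ℕ × ℕ).1, (e (σ⁻¹ k) : ℕ × ℕ).2)) :
    σ ∈ (rowGroup e : Set (Equiv.Perm ι)) * (colGroup e : Set (Equiv.Perm ι)) := by
  classical
  have hmem := μ.mem_of_injective h (fun i => card_filter_equiv e (·.1 < i)) fun j => by
    rw [colLen_eq_card, col, ← card_filter_equiv ((σ⁻¹ : Equiv.Perm ι).trans e)]
    rfl
  let Φ : ι ≃ μ.cells := Equiv.ofBijective (fun k => ⟨_, hmem k⟩)
    ((Fintype.bijective_iff_injective_and_card _).2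
      ⟨fun _ _ hab => h (congrArg Subtype.val hab), Fintype.card_congr e⟩)
  let p : Equiv.Perm ι := e.trans Φ.symm
  refine ⟨p, fun k => ?_, p⁻¹ * σ, fun k => ?_, mul_inv_cancel_left p σ⟩
  · exact (congrArg (fun c : μ.cells => (c : ℕ × ℕ).1) (Φ.apply_symm_apply (e k)) :)
  · simp [p, Φ, Equiv.Perm.inv_def]

theorem exists_swap_of_notMem_rowGroup_mul_colGroup [Fintype ι] [DecidableEq ι]
    (e : ι ≃ μ.cells) {σ : Equiv.Perm ι}
    (hσ : σ ∉ (rowGroup e : Set (Equiv.Perm ι)) * (colGroup e : Set (Equiv.Perm ι))) :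
    ∃ t ∈ rowGroup e, σ⁻¹ * t * σ ∈ colGroup e ∧ Equiv.Perm.sign t = -1 := by
  obtain ⟨i, j, hij, hne⟩ :=
    Function.not_injective_iff.1 (mt (mem_rowGroup_mul_colGroup_of_injective e) hσ)
  refine ⟨Equiv.swap i j, Equiv.Perm.swap_mem_fiberStabilizer (Prod.ext_iff.1 hij).1, ?_,
    Equiv.Perm.sign_swap hne⟩
  have hconj := Equiv.swap_apply_apply σ⁻¹ i j
  rw [inv_inv] at hconj
  rw [← hconj]
  exact Equiv.Perm.swap_mem_fiberStabilizer (Prod.ext_iff.1 hij).2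

end YoungDiagram

open YoungDiagram in
theorem young_symmetrizer_sq_general (n : ℕ) (μ : YoungDiagram)
    (e : Fin n ≃ {c // c ∈ μ.cells}) :
    ∃ α : ℚ, 0 < α ∧
      (rowSymmetrizer n μ e * colSymmetrizer n μ e) *
          (rowSymmetrizer n μ e * colSymmetrizer n μ e) =
        (α : ℂ) • (rowSymmetrizer n μ e * colSymmetrizer n μ e) := by
  classical
  have hP : rowSymmetrizer n μ e = symmetrizer ℂ (rowGroup e) :=
    sum_subtype (p := (· ∈ rowGroup e)) _ (fun _ => by simp [rowGroup]) _
  have hQ : colSymmetrizer n μ e = antisymmetrizer ℂ (colGroup e) Equiv.Perm.sign :=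
    sum_subtype (p := (· ∈ colGroup e)) _ (fun _ => by simp [colGroup]) _
  have hY : rowSymmetrizer n μ e * colSymmetrizer n μ e =
      youngSymmetrizer ℂ (rowGroup e) (colGroup e) Equiv.Perm.sign := by
    rw [hP, hQ, youngSymmetrizer]
  have hsq := youngSymmetrizer_mul_self (k := ℂ) (disjoint_rowGroup_colGroup e)
    fun _ => exists_swap_of_notMem_rowGroup_mul_colGroup e
  obtain ⟨α, hα, hβ⟩ := exists_pos_rat_eq_of_mul_self_eq_smul
    (coeff_one_youngSymmetrizer (disjoint_rowGroup_colGroup e)) hsq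
  exact ⟨α, hα, by rw [hY, hsq, hβ]⟩

/-- For a standard Young tableau `Λ` of shape `λ ⊢ n` (encoded by a bijection
`e : Fin n ≃ cells λ` whose entries increase along rows and down columns), the
Young symmetrizer `Y_Λ = P_Λ Q_Λ` satisfies `Y_Λ² = α_Λ · Y_Λ` for some positive
rational number `α_Λ`. -/
theorem young_symmetrizer_sq (n : ℕ) (μ : YoungDiagram) (hμ : μ.card = n)
    (e : Fin n ≃ {c // c ∈ μ.cells})
    (hrow : ∀ j k : Fin n, ((e j : ℕ × ℕ)).1 = ((e k : ℕ × ℕ)).1 →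
      ((e j : ℕ × ℕ)).2 < ((e k : ℕ × ℕ)).2 → j < k)
    (hcol : ∀ j k : Fin n, ((e j : ℕ × ℕ)).2 = ((e k : ℕ × ℕ)).2 →
      ((e j : ℕ × ℕ)).1 < ((e k : ℕ × ℕ)).1 → j < k) :
    ∃ α : ℚ, 0 < α ∧
      (rowSymmetrizer n μ e * colSymmetrizer n μ e) *
          (rowSymmetrizer n μ e * colSymmetrizer n μ e) =
        (α : ℂ) • (rowSymmetrizer n μ e * colSymmetrizer n μ e) :=
  young_symmetrizer_sq_general n μ e
end

section
/- In ℂ[S_n], for any partition λ with a single row (λ = (n)) and its unique standard tableau Λ, the ordered product F_Λ = ∏_{(p,q), lexicographic} (1 - (p q)/(c_p - c_q)) with contents c_k = k - 1 equals the normalized row symmetrizer: F_Λ = P_Λ Q_Λ P_Λ / n! = Σ_{σ ∈ S_n} σ (the sum of all permutations). -/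
/-- The list of pairs `(p, q)` with `p < q` in `Fin n`, in lexicographic order. -/
def lexPairs (n : ℕ) : List (Fin n × Fin n) :=
  (List.finRange n).flatMap fun p =>
    ((List.finRange n).filter fun q => p < q).map fun q => (p, q)

/-- The fusion product for the single-row tableau: the ordered product, over the
pairs `(p,q)` with `p < q` taken in lexicographic order, of
`f_{pq}(c_p, c_q) = 1 - (p q)/(c_p - c_q)`, with contents `c_k = k`
(0-indexed; i.e. `c_k = k - 1` with 1-indexed entries). -/
noncomputable def rowFusion (n : ℕ) : MonoidAlgebra ℂ (Equiv.Perm (Fin n)) :=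
  ((lexPairs n).map fun pq =>
    (1 : MonoidAlgebra ℂ (Equiv.Perm (Fin n))) -
      (((pq.1 : ℕ) : ℂ) - ((pq.2 : ℕ) : ℂ))⁻¹ •
        MonoidAlgebra.of ℂ (Equiv.Perm (Fin n)) (Equiv.swap pq.1 pq.2)).prod

/-!
Peeling off the pairs `(0, q)`, the fusion product for `n + 1` is `B * ι (F_n)`, where `ι` embeds
`S_n` as the stabiliser of `0` and `B = ∏_{q = 1}^{n} (1 + (0 q) / q)`. By induction `ι (F_n)` is
the sum `S'` over that stabiliser, which absorbs every `(a b)` with `a, b ≠ 0`; hence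
`(0 a) (0 b) S' = (0 b) (a b) S' = (0 b) S'`. So when `B S'` is multiplied out from the right, the
factors to the left of `(0 q) / q` act on `(0 q) S'` as the scalars `1 + 1 / j`, whose product `q`
cancels the weight `1 / q`. Thus `B S' = (1 + ∑ q, (0 q)) S'`, which is the sum over `S_{n+1}` by
the coset decomposition along the image of `0`.
-/

section WeightedProduct

variable {K A : Type*} [Field K] [CharZero K] [Ring A] [Algebra K A]

theorem List.prod_ofFn_one_add_inv_smul_mul_of_mul_eq {m : ℕ} (g : Fin m → A) {y : A}
    (hy : ∀ j, g j * y = y) :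
    (List.ofFn fun j : Fin m => 1 + ((j : K) + 1)⁻¹ • g j).prod * y = ((m : K) + 1) • y := by
  induction m with
  | zero => simp
  | succ m ih =>
    have hm : (m : K) + 1 ≠ 0 := by exact_mod_cast m.succ_ne_zero
    have hlast : (1 + ((m : K) + 1)⁻¹ • g (Fin.last m)) * y = (1 + ((m : K) + 1)⁻¹) • y := by
      rw [add_mul, one_mul, smul_mul_assoc, hy, add_smul, one_smul]
    simp only [List.ofFn_succ_last, List.prod_append, List.prod_singleton, Fin.val_castSucc,
      Fin.val_last]
    rw [mul_assoc, hlast, mul_smul_comm, ih _ fun j => hy _, smul_smul]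
    congr 1
    field_simp
    push_cast
    ring

theorem List.prod_ofFn_one_add_inv_smul_mul {m : ℕ} (g : Fin m → A) {x : A}
    (hx : ∀ i j : Fin m, i < j → g i * (g j * x) = g j * x) :
    (List.ofFn fun j : Fin m => 1 + ((j : K) + 1)⁻¹ • g j).prod * x = (1 + ∑ j, g j) * x := by
  induction m with
  | zero => simp
  | succ m ih =>
    have hm : (m : K) + 1 ≠ 0 := by exact_mod_cast m.succ_ne_zero
    simp only [List.ofFn_succ_last, List.prod_append, List.prod_singleton, Fin.val_castSucc,
      Fin.val_last]
    rw [mul_assoc, add_mul, one_mul, smul_mul_assoc,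
      mul_add, mul_smul_comm, ih _ fun i j hij => hx _ _ (Fin.castSucc_lt_castSucc_iff.2 hij),
      List.prod_ofFn_one_add_inv_smul_mul_of_mul_eq _
        fun j => hx _ _ (Fin.castSucc_lt_last j)]
    simp [Fin.sum_univ_castSucc, smul_smul, inv_mul_cancel₀ hm, add_mul, add_assoc]

end WeightedProduct

open Equiv Perm MonoidAlgebra

local notation "succPerm" n => viaEmbeddingHom (Fin.succEmb n)

section GroupAlgebra

variable {k G : Type*} [CommSemiring k] [Group G]

theorem MonoidAlgebra.of_mul_sum_of [Fintype G] (g : G) :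
    of k G g * ∑ σ, of k G σ = ∑ σ, of k G σ := by
  simp_rw [Finset.mul_sum, ← map_mul]
  exact Fintype.sum_equiv (Equiv.mulLeft g) _ _ fun _ => rfl

theorem MonoidAlgebra.sum_of_mul_sum_of [Fintype G] :
    (∑ σ, of k G σ) * ∑ σ, of k G σ = (Fintype.card G : k) • ∑ σ, of k G σ := by
  simp_rw [Finset.sum_mul, of_mul_sum_of, Finset.sum_const, Finset.card_univ,
    Nat.cast_smul_eq_nsmul]

theorem MonoidAlgebra.mapDomainAlgHom_of {H : Type*} [Monoid H] (φ : G →* H) (g : G) :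
    mapDomainAlgHom k k φ (of k G g) = of k H (φ g) := by
  simp [mapDomain_single]

end GroupAlgebra

theorem Equiv.swap_mul_swap_eq_swap_mul_swap_s16 {α : Type*} [DecidableEq α] {x y z : α}
    (hyx : y ≠ x) (hyz : y ≠ z) : swap x y * swap x z = swap x z * swap y z := by
  rw [mul_swap_eq_swap_mul (swap x z) y z, swap_apply_of_ne_of_ne hyx hyz, swap_apply_right,
    swap_comm]

section Perm

variable {n : ℕ}

theorem viaEmbeddingHom_succEmb_apply_zero (σ : Perm (Fin n)) : (succPerm n) σ 0 = 0 :=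
  viaEmbedding_apply_of_notMem σ _ 0 (by simp)

theorem viaEmbeddingHom_succEmb_apply_succ (σ : Perm (Fin n)) (i : Fin n) :
    (succPerm n) σ i.succ = (σ i).succ :=
  viaEmbedding_apply σ (Fin.succEmb n) i

theorem viaEmbeddingHom_succEmb_swap (i j : Fin n) :
    (succPerm n) (swap i j) = swap i.succ j.succ := by
  ext x
  cases x using Fin.cases with
  | zero =>
    rw [viaEmbeddingHom_succEmb_apply_zero,
      swap_apply_of_ne_of_ne (Fin.succ_ne_zero i).symm (Fin.succ_ne_zero j).symm]
  | succ x =>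
    rw [viaEmbeddingHom_succEmb_apply_succ, (Fin.succ_injective n).swap_apply]

theorem decomposeFin_symm_eq_swap_mul (p : Fin (n + 1)) (σ : Perm (Fin n)) :
    decomposeFin.symm (p, σ) = swap 0 p * (succPerm n) σ := by
  ext x
  cases x using Fin.cases with
  | zero => simp [viaEmbeddingHom_succEmb_apply_zero]
  | succ x => simp [viaEmbeddingHom_succEmb_apply_succ]

variable {k : Type*} [CommSemiring k]

theorem sum_of_perm_fin_succ :
    ∑ τ : Perm (Fin (n + 1)), of k _ τ =
      (1 + ∑ j : Fin n, of k _ (swap 0 j.succ)) *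
        mapDomainAlgHom k k (succPerm n) (∑ σ : Perm (Fin n), of k _ σ) := by
  rw [← decomposeFin.symm.sum_comp, Fintype.sum_prod_type]
  simp_rw [decomposeFin_symm_eq_swap_mul, map_mul, ← Finset.mul_sum, ← Finset.sum_mul, map_sum,
    mapDomainAlgHom_of, Fin.sum_univ_succ, swap_self, ← Perm.one_def, map_one]

theorem of_swap_zero_mul_of_swap_zero_mul_map_sum {i j : Fin n} (hij : i ≠ j) :
    of k _ (swap 0 i.succ) * (of k _ (swap 0 j.succ) *
        mapDomainAlgHom k k (succPerm n) (∑ σ : Perm (Fin n), of k _ σ)) =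
      of k _ (swap 0 j.succ) * mapDomainAlgHom k k (succPerm n) (∑ σ : Perm (Fin n), of k _ σ) := by
  rw [← mul_assoc, ← map_mul,
    swap_mul_swap_eq_swap_mul_swap_s16 (Fin.succ_ne_zero i) ((Fin.succ_injective n).ne hij), map_mul,
    mul_assoc, ← viaEmbeddingHom_succEmb_swap, ← mapDomainAlgHom_of, ← map_mul, of_mul_sum_of]

end Perm

theorem lexPairs_succ (n : ℕ) :
    lexPairs (n + 1) =
      (List.finRange n).map (fun q => (0, q.succ)) ++ (lexPairs n).map (Prod.map Fin.succ Fin.succ) := by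
  rw [lexPairs, lexPairs, List.finRange_succ, List.flatMap_cons, List.flatMap_map, List.map_flatMap]
  congr 1
  · simp [List.filter_map, Function.comp_def, Fin.succ_pos]
  · refine List.flatMap_congr fun p _ => ?_
    simp [List.filter_map, Function.comp_def]

theorem rowFusion_succ (n : ℕ) :
    rowFusion (n + 1) =
      (List.ofFn fun j : Fin n => 1 + ((j : ℂ) + 1)⁻¹ • of ℂ _ (swap 0 j.succ)).prod *
        mapDomainAlgHom ℂ ℂ (succPerm n) (rowFusion n) := by
  rw [rowFusion, lexPairs_succ, List.map_append, List.prod_append, List.map_map, List.map_map,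
    rowFusion, map_list_prod, List.map_map, List.ofFn_eq_map]
  congr 2
  · refine List.map_congr_left fun q _ => ?_
    simp only [Function.comp_apply, Fin.val_zero, Fin.val_succ]
    push_cast
    rw [zero_sub, inv_neg, neg_smul, sub_neg_eq_add]
  · refine List.map_congr_left fun pq _ => ?_
    simp only [Function.comp_apply, Prod.map_fst, Prod.map_snd, Fin.val_succ, map_sub, map_one,
      map_smul, mapDomainAlgHom_of, viaEmbeddingHom_succEmb_swap]
    push_cast
    rw [add_sub_add_right_eq_sub]

theorem rowFusion_eq_sum_of (n : ℕ) : rowFusion n = ∑ σ : Perm (Fin n), of ℂ _ σ := by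
  induction n with
  | zero => simp [rowFusion, lexPairs, MonoidAlgebra.one_def]
  | succ n ih =>
    rw [rowFusion_succ, ih, List.prod_ofFn_one_add_inv_smul_mul, sum_of_perm_fin_succ]
    exact fun i j hij => of_swap_zero_mul_of_swap_zero_mul_map_sum hij.ne

/-- For the single-row shape `λ = (n)` with its unique (row) standard tableau,
the fusion product `F_Λ = ∏_{(p,q) lex} f_{pq}(c_p, c_q)` equals the normalized
row symmetrizer `P_Λ Q_Λ P_Λ / n!` (here `Q_Λ = 1`), which is the sum of all
permutations `Σ_{σ ∈ S_n} σ`. -/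
theorem rowFusion_eq_symmetrizer (n : ℕ) :
    rowFusion n = ((Nat.factorial n : ℂ))⁻¹ •
        ((∑ σ : Equiv.Perm (Fin n), MonoidAlgebra.of ℂ (Equiv.Perm (Fin n)) σ) *
          (1 : MonoidAlgebra ℂ (Equiv.Perm (Fin n))) *
          (∑ σ : Equiv.Perm (Fin n), MonoidAlgebra.of ℂ (Equiv.Perm (Fin n)) σ)) ∧
    rowFusion n = ∑ σ : Equiv.Perm (Fin n), MonoidAlgebra.of ℂ (Equiv.Perm (Fin n)) σ := by
  refine ⟨?_, rowFusion_eq_sum_of n⟩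
  rw [mul_one, sum_of_mul_sum_of, Fintype.card_perm, Fintype.card_fin, smul_smul,
    inv_mul_cancel₀ (mod_cast n.factorial_ne_zero), one_smul, rowFusion_eq_sum_of]
end

section
/- Write F_Λ(z₁,...,z_n) = ∏_{(p,q) lex} f_{pq}(z_p + c_p(Λ), z_q + c_q(Λ)) in ℂ[S_n]. Multiplying this ordered product on the right by the longest element σ₀ ∈ S_n and expanding in the group basis, the coefficient of σ₀ is identically 1 as a rational function of z₁,...,z_n; consequently, whenever the limit F_Λ of F_Λ(z₁,...,z_n) on a subspace exists, the coefficient of the identity in F_Λ is 1. -/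
/-- The content `c_k(Λ) = j - i` of the entry `k` of a tableau encoded by the
bijection `e` (entry ↦ cell `(i, j)`), as a complex number. -/
noncomputable def tabContent {n : ℕ} {μ : YoungDiagram}
    (e : Fin n ≃ {c // c ∈ μ.cells}) (k : Fin n) : ℂ :=
  ((((e k : ℕ × ℕ)).2 : ℂ)) - ((((e k : ℕ × ℕ)).1 : ℂ))

/-- The fusion product
`F_Λ(z₁,…,z_n) = ∏_{(p,q) lex} f_{pq}(z_p + c_p(Λ), z_q + c_q(Λ))` in `ℂ[S_n]`,
the product over the pairs `(p,q)`, `p < q`, in lexicographic order, of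
`1 - (p q)/((z_p + c_p) - (z_q + c_q))`. -/
noncomputable def fusionProd (n : ℕ) {μ : YoungDiagram}
    (e : Fin n ≃ {c // c ∈ μ.cells}) (z : Fin n → ℂ) :
    MonoidAlgebra ℂ (Equiv.Perm (Fin n)) :=
  ((lexPairs n).map fun pq =>
    (1 : MonoidAlgebra ℂ (Equiv.Perm (Fin n))) -
      ((z pq.1 + tabContent e pq.1) - (z pq.2 + tabContent e pq.2))⁻¹ •
        MonoidAlgebra.of ℂ (Equiv.Perm (Fin n)) (Equiv.swap pq.1 pq.2)).prod


/-!
Expanding the product, the coefficient of the identity collects one term for each sublist of the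
lexicographically ordered pairs whose product of transpositions is the identity, and only the
empty sublist qualifies: if `(m, q)` is the first pair of a nonempty sublist, the transpositions
`(m q')` of the sublist come first with increasing `q'`, and all later ones fix `m`, so the
product sends `m` to the largest such `q'`. Right multiplication by `σ₀` moves the coefficient
of `1` to `σ₀`.
-/

theorem List.prod_map_one_add_eq_sum_sublists' {ι R : Type*} [Semiring R] (l : List ι)
    (f : ι → R) :
    (l.map fun i => 1 + f i).prod = (l.sublists'.map fun s => (s.map f).prod).sum := by
  induction l with
  | nil => simp
  | cons a l ih =>
    rw [List.map_cons, List.prod_cons, ih, List.sublists'_cons, List.map_append, List.sum_append,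
      add_mul, one_mul, List.map_map, ← List.sum_map_mul_left]
    congr 2

theorem List.sum_map_sublists'_eq_apply_nil {ι M : Type*} [AddCommMonoid M] (l : List ι)
    (f : List ι → M) (hf : ∀ s, s.Sublist l → s ≠ [] → f s = 0) :
    (l.sublists'.map f).sum = f [] := by
  induction l with
  | nil => simp
  | cons a l ih =>
    have hcons : ∀ s ∈ l.sublists', f (a :: s) = 0 := fun s hs =>
      hf _ ((List.mem_sublists'.mp hs).cons_cons a) (List.cons_ne_nil a s)
    rw [List.sublists'_cons, List.map_append, List.sum_append, List.map_map,
      ih fun s hs => hf s (hs.trans (List.sublist_cons_self a l)),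
      List.sum_eq_zero (by simpa using hcons), add_zero]

namespace MonoidAlgebra

variable {ι R M : Type*} [Semiring R] [Monoid M]

theorem list_prod_map_single (l : List ι) (g : ι → M) (r : ι → R) :
    (l.map fun i => single (g i) (r i)).prod = single (l.map g).prod (l.map r).prod := by
  induction l with
  | nil => rfl
  | cons a l ih => simp only [List.map_cons, List.prod_cons, ih, single_mul_single]

theorem coeff_list_sum (l : List R[M]) (m : M) :
    l.sum.coeff m = (l.map fun x => x.coeff m).sum :=
  map_list_sum ((Finsupp.applyAddHom m).comp (coeffAddEquiv (R := R) (M := M)).toAddMonoidHom) l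

theorem coeff_one_list_prod_one_add_single (l : List ι) (g : ι → M) (r : ι → R)
    (hg : ∀ s, s.Sublist l → s ≠ [] → (s.map g).prod ≠ 1) :
    (l.map fun i => 1 + single (g i) (r i)).prod.coeff 1 = 1 := by
  classical
  rw [List.prod_map_one_add_eq_sum_sublists', coeff_list_sum, List.map_map]
  refine (List.sum_map_sublists'_eq_apply_nil l _ fun s hs hne => ?_).trans ?_
  · simp [list_prod_map_single, Finsupp.single_eq_of_ne (hg s hs hne).symm]
  · simp [one_def]

end MonoidAlgebra

section SwapProduct

variable {α : Type*}

def swapProd [DecidableEq α] (l : List (α × α)) : Equiv.Perm α :=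
  (l.map fun pq => Equiv.swap pq.1 pq.2).prod

theorem swapProd_cons_apply [DecidableEq α] (a : α × α) (l : List (α × α)) (x : α) :
    swapProd (a :: l) x = Equiv.swap a.1 a.2 (swapProd l x) := rfl

theorem swapProd_apply_of_forall_ne [DecidableEq α] {l : List (α × α)} {x : α}
    (h : ∀ pq ∈ l, pq.1 ≠ x ∧ pq.2 ≠ x) : swapProd l x = x := by
  induction l with
  | nil => rfl
  | cons a l ih =>
    obtain ⟨ha₁, ha₂⟩ := h a List.mem_cons_self
    rw [swapProd_cons_apply, ih fun pq hpq => h pq (List.mem_cons_of_mem a hpq),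
      Equiv.swap_apply_of_ne_of_ne ha₁.symm ha₂.symm]

variable [LinearOrder α]

theorem le_swapProd_cons_apply {m q : α} {l : List (α × α)} (hmq : m < q)
    (hlt : ∀ pq ∈ l, pq.1 < pq.2)
    (hsorted : ((m, q) :: l).Pairwise (Prod.Lex (· < ·) (· < ·))) :
    q ≤ swapProd ((m, q) :: l) m := by
  induction l generalizing q with
  | nil => simp [swapProd]
  | cons a l ih =>
    obtain ⟨m', q'⟩ := a
    rw [List.pairwise_cons] at hsorted
    rcases Prod.lex_def.mp (hsorted.1 _ List.mem_cons_self) with hm | ⟨rfl, hq⟩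
    · have hfix : swapProd ((m', q') :: l) m = m := by
        refine swapProd_apply_of_forall_ne fun pq hpq => ?_
        have hm_lt : m < pq.1 := by
          rcases List.mem_cons.mp hpq with rfl | hpq
          · exact hm
          · rcases Prod.lex_def.mp ((List.pairwise_cons.mp hsorted.2).1 pq hpq) with h | ⟨h, -⟩
            exacts [hm.trans h, h ▸ hm]
        exact ⟨hm_lt.ne', (hm_lt.trans (hlt pq hpq)).ne'⟩
      rw [swapProd_cons_apply, hfix, Equiv.swap_apply_left]
    · have hv := ih (hmq.trans hq) (fun pq hpq => hlt pq (List.mem_cons_of_mem _ hpq)) hsorted.2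
      have hqv : q < swapProd ((m, q') :: l) m := hq.trans_le hv
      rw [swapProd_cons_apply, Equiv.swap_apply_of_ne_of_ne (hmq.trans hqv).ne' hqv.ne']
      exact hqv.le

theorem swapProd_ne_one {l : List (α × α)} (hl : l ≠ []) (hlt : ∀ pq ∈ l, pq.1 < pq.2)
    (hsorted : l.Pairwise (Prod.Lex (· < ·) (· < ·))) : swapProd l ≠ 1 := by
  obtain ⟨⟨m, q⟩, l, rfl⟩ := List.exists_cons_of_ne_nil hl
  have hmq : m < q := hlt _ List.mem_cons_self
  intro h
  have := le_swapProd_cons_apply hmq (fun pq hpq => hlt pq (List.mem_cons_of_mem _ hpq)) hsorted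
  rw [h, Equiv.Perm.one_apply] at this
  exact this.not_gt hmq

end SwapProduct

theorem fst_lt_snd_of_mem_lexPairs {n : ℕ} {pq : Fin n × Fin n} (h : pq ∈ lexPairs n) :
    pq.1 < pq.2 := by
  simp only [lexPairs, List.mem_flatMap, List.mem_map, List.mem_filter] at h
  obtain ⟨p, -, q, ⟨-, hq⟩, rfl⟩ := h
  simpa using hq

theorem pairwise_lexPairs (n : ℕ) : (lexPairs n).Pairwise (Prod.Lex (· < ·) (· < ·)) := by
  rw [lexPairs, List.pairwise_flatMap]
  refine ⟨fun p _ => ?_, (List.pairwise_lt_finRange n).imp fun hp => ?_⟩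
  · rw [List.pairwise_map]
    exact ((List.pairwise_lt_finRange n).filter _).imp (Prod.Lex.right _)
  · simp only [List.mem_map, List.mem_filter]
    rintro _ ⟨_, -, rfl⟩ _ ⟨_, -, rfl⟩
    exact Prod.Lex.left _ _ hp

theorem fusionProd_coeff_longest_one_general (n : ℕ) (μ : YoungDiagram)
    (e : Fin n ≃ {c // c ∈ μ.cells})
    (z : Fin n → ℂ) :
    ((fusionProd n e z * MonoidAlgebra.of ℂ (Equiv.Perm (Fin n)) Fin.revPerm).coeff
        Fin.revPerm = 1) ∧
    ((fusionProd n e z).coeff 1 = 1) := by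
  have hcoeff_one : (fusionProd n e z).coeff 1 = 1 := by
    simp only [fusionProd, MonoidAlgebra.of_apply, MonoidAlgebra.smul_single', mul_one,
      sub_eq_add_neg, ← MonoidAlgebra.single_neg]
    exact MonoidAlgebra.coeff_one_list_prod_one_add_single _ _ _ fun s hs hne =>
      swapProd_ne_one hne (fun pq hpq => fst_lt_snd_of_mem_lexPairs (hs.subset hpq))
        ((pairwise_lexPairs n).sublist hs)
  refine ⟨?_, hcoeff_one⟩
  rw [MonoidAlgebra.of_apply, MonoidAlgebra.coeff_mul_single_apply, mul_inv_cancel, mul_one,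
    hcoeff_one]

/-- For a standard tableau `Λ` of shape `λ ⊢ n` and parameters `z` at which all
the factors are defined, multiplying `F_Λ(z₁,…,z_n)` on the right by the longest
element `σ₀ ∈ S_n` yields an element whose coefficient at `σ₀` is `1`;
consequently the coefficient of the identity in `F_Λ(z₁,…,z_n)` is `1`. -/
theorem fusionProd_coeff_longest_one (n : ℕ) (μ : YoungDiagram) (hμ : μ.card = n)
    (e : Fin n ≃ {c // c ∈ μ.cells})
    (hrow : ∀ j k : Fin n, ((e j : ℕ × ℕ)).1 = ((e k : ℕ × ℕ)).1 →
      ((e j : ℕ × ℕ)).2 < ((e k : ℕ × ℕ)).2 → j < k)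
    (hcol : ∀ j k : Fin n, ((e j : ℕ × ℕ)).2 = ((e k : ℕ × ℕ)).2 →
      ((e j : ℕ × ℕ)).1 < ((e k : ℕ × ℕ)).1 → j < k)
    (z : Fin n → ℂ)
    (hz : ∀ p q : Fin n, p ≠ q → z p + tabContent e p ≠ z q + tabContent e q) :
    ((fusionProd n e z * MonoidAlgebra.of ℂ (Equiv.Perm (Fin n)) Fin.revPerm).coeff
        Fin.revPerm = 1) ∧
    ((fusionProd n e z).coeff 1 = 1) :=
  fusionProd_coeff_longest_one_general n μ e z
end

section
/- Let φ be the ℂ-linear antiautomorphism of ℂ[S_n] with φ(σ) = σ⁻¹ for σ ∈ S_n. Then for any standard tableau Λ, every value of the ordered product F_Λ(z₁,...,z_n) = ∏_{(p,q) lex} f_{pq}(z_p + c_p(Λ), z_q + c_q(Λ)) at a point where it is defined is φ-invariant; i.e., applying φ to the product and restoring the lexicographic order via the Yang–Baxter relations yields the same element. -/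
/-- The `ℂ`-linear involutive map `φ` of `ℂ[S_n]` induced by `σ ↦ σ⁻¹`. -/
noncomputable def permInvol (n : ℕ) :
    MonoidAlgebra ℂ (Equiv.Perm (Fin n)) → MonoidAlgebra ℂ (Equiv.Perm (Fin n)) :=
  fun x => MonoidAlgebra.ofCoeff (Finsupp.equivMapDomain (Equiv.inv (Equiv.Perm (Fin n))) x.coeff)

open Equiv Function

section YangBaxter

variable {ι M : Type*} [Monoid M]

def orderedPairs : List ι → List (ι × ι)
  | [] => []
  | x :: l => l.map (x, ·) ++ orderedPairs l

def lexProd (h : ι → ι → M) (l : List ι) : M := ((orderedPairs l).map (uncurry h)).prod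

def revLexProd (h : ι → ι → M) (l : List ι) : M := ((orderedPairs l).map (uncurry h)).reverse.prod

lemma lexProd_cons (h : ι → ι → M) (x : ι) (l : List ι) :
    lexProd h (x :: l) = (l.map (h x)).prod * lexProd h l := by
  simp [lexProd, orderedPairs, Function.comp_def]

lemma revLexProd_cons (h : ι → ι → M) (x : ι) (l : List ι) :
    revLexProd h (x :: l) = revLexProd h l * (l.map (h x)).reverse.prod := by
  simp [revLexProd, orderedPairs, Function.comp_def]

structure IsYangBaxter (h : ι → ι → M) : Prop where
  commute : ∀ {a b c d : ι}, a ≠ c → a ≠ d → b ≠ c → b ≠ d → Commute (h a b) (h c d)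
  braid : ∀ {a b c : ι}, a ≠ b → a ≠ c → b ≠ c → h a b * h a c * h b c = h b c * h a c * h a b

namespace IsYangBaxter

variable {h : ι → ι → M} (hh : IsYangBaxter h)
include hh

lemma commute_prod_map {a b p : ι} {l : List ι} (hap : a ≠ p) (hbp : b ≠ p) (hal : a ∉ l)
    (hbl : b ∉ l) : Commute (h a b) (l.map (h p)).prod :=
  Commute.list_prod_right _ _ <| List.forall_mem_map.2 fun _ hq =>
    hh.commute hap (ne_of_mem_of_not_mem hq hal).symm hbp (ne_of_mem_of_not_mem hq hbl).symm

lemma commute_lexProd {a b : ι} {l : List ι} (hal : a ∉ l) (hbl : b ∉ l) :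
    Commute (h a b) (lexProd h l) := by
  induction l with
  | nil => exact Commute.one_right _
  | cons x t ih =>
    rw [List.mem_cons, not_or] at hal hbl
    rw [lexProd_cons]
    exact (hh.commute_prod_map hal.1 hbl.1 hal.2 hbl.2).mul_right (ih hal.2 hbl.2)

lemma braid_prod_map {p a : ι} (hpa : p ≠ a) {l : List ι} (hl : l.Nodup) (hpl : p ∉ l)
    (hal : a ∉ l) :
    h p a * (l.map (h p)).prod * (l.map (h a)).prod =
      (l.map (h a)).prod * (l.map (h p)).prod * h p a := by
  induction l with
  | nil => simp
  | cons x t ih =>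
    rw [List.mem_cons, not_or] at hpl hal
    obtain ⟨hxt, ht⟩ := List.nodup_cons.1 hl
    have hax : Commute (h a x) (t.map (h p)).prod :=
      hh.commute_prod_map hpa.symm (Ne.symm hpl.1) hal.2 hxt
    have hpx : Commute (h p x) (t.map (h a)).prod :=
      hh.commute_prod_map hpa (Ne.symm hal.1) hpl.2 hxt
    simp only [List.map_cons, List.prod_cons]
    calc h p a * (h p x * (t.map (h p)).prod) * (h a x * (t.map (h a)).prod)
        = h p a * h p x * h a x * ((t.map (h p)).prod * (t.map (h a)).prod) := by
          simp only [mul_assoc, hax.symm.left_comm]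
      _ = h a x * h p x * (h p a * (t.map (h p)).prod * (t.map (h a)).prod) := by
          rw [hh.braid hpa hpl.1 hal.1]; simp only [mul_assoc]
      _ = h a x * h p x * ((t.map (h a)).prod * (t.map (h p)).prod * h p a) := by
          rw [ih ht hpl.2 hal.2]
      _ = h a x * (t.map (h a)).prod * (h p x * (t.map (h p)).prod) * h p a := by
          simp only [mul_assoc, hpx.left_comm]

lemma prod_map_mul_lexProd {p : ι} {l : List ι} (hl : l.Nodup) (hpl : p ∉ l) :
    (l.map (h p)).prod * lexProd h l = lexProd h l * (l.map (h p)).reverse.prod := by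
  induction l with
  | nil => simp [lexProd, orderedPairs]
  | cons x t ih =>
    rw [List.mem_cons, not_or] at hpl
    obtain ⟨hxt, ht⟩ := List.nodup_cons.1 hl
    have hpx : Commute (h p x) (lexProd h t) := hh.commute_lexProd hpl.2 hxt
    simp only [List.map_cons, List.prod_cons, List.reverse_cons, List.prod_append,
      List.prod_nil, mul_one, lexProd_cons]
    calc h p x * (t.map (h p)).prod * ((t.map (h x)).prod * lexProd h t)
        = (t.map (h x)).prod * (t.map (h p)).prod * (h p x * lexProd h t) := by
          rw [← mul_assoc, hh.braid_prod_map hpl.1 ht hpl.2 hxt]; simp only [mul_assoc]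
      _ = (t.map (h x)).prod * ((t.map (h p)).prod * lexProd h t) * h p x := by
          rw [hpx.eq]; simp only [mul_assoc]
      _ = (t.map (h x)).prod * lexProd h t * ((t.map (h p)).reverse.prod * h p x) := by
          rw [ih ht hpl.2]; simp only [mul_assoc]

lemma lexProd_eq_revLexProd {l : List ι} (hl : l.Nodup) : lexProd h l = revLexProd h l := by
  induction l with
  | nil => rfl
  | cons x t ih =>
    obtain ⟨hxt, ht⟩ := List.nodup_cons.1 hl
    rw [lexProd_cons, revLexProd_cons, hh.prod_map_mul_lexProd ht hxt, ih ht]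

end IsYangBaxter

end YangBaxter

namespace Equiv

variable {ι : Type*} [DecidableEq ι] {a b c d : ι}

lemma swap_mul_swap_of_ne (hca : c ≠ a) (hcb : c ≠ b) :
    swap a b * swap a c = swap b c * swap a b := by
  rw [mul_swap_eq_swap_mul, swap_apply_left, swap_apply_of_ne_of_ne hca hcb]

lemma commute_swap_swap (hca : c ≠ a) (hcb : c ≠ b) (hda : d ≠ a) (hdb : d ≠ b) :
    Commute (swap a b) (swap c d) := by
  rw [Commute, SemiconjBy, mul_swap_eq_swap_mul, swap_apply_of_ne_of_ne hca hcb,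
    swap_apply_of_ne_of_ne hda hdb]

end Equiv

-- The relations are those of the transpositions `s = (a b)`, `t = (a c)`, `r = (b c)`.
lemma yangBaxter_one_sub_smul {k A : Type*} [CommRing k] [Ring A] [Algebra k A] {s t r : A}
    (hst : s * t = r * s) (htr : t * r = s * t) (hts : t * s = s * r) (hrt : r * t = t * s)
    {α β γ : k} (hαβγ : α * γ = α * β + β * γ) :
    (1 - α • s) * (1 - β • t) * (1 - γ • r) = (1 - γ • r) * (1 - β • t) * (1 - α • s) := by
  have hrsr : r * s * r = s * r * s := by rw [← hst, mul_assoc, htr, hst, ← mul_assoc]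
  simp only [sub_mul, mul_sub, one_mul, mul_one, smul_mul_assoc, mul_smul_comm, hst, htr, hts,
    hrt, hrsr]
  match_scalars <;> grind

noncomputable def swapFactor {k ι : Type*} [Field k] [DecidableEq ι] (u : ι → k) (p q : ι) :
    MonoidAlgebra k (Perm ι) :=
  1 - (u p - u q)⁻¹ • MonoidAlgebra.of k (Perm ι) (swap p q)

lemma isYangBaxter_swapFactor {k ι : Type*} [Field k] [DecidableEq ι] {u : ι → k}
    (hu : Injective u) : IsYangBaxter (swapFactor u) where
  commute hac had hbc hbd := by
    have h := (commute_swap_swap hac.symm hbc.symm had.symm hbd.symm).map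
      (MonoidAlgebra.of k (Perm ι))
    exact (Commute.one_left _).sub_left ((Commute.one_right _).sub_right
      ((h.smul_left _).smul_right _))
  braid {a b c} hab hac hbc := by
    refine yangBaxter_one_sub_smul ?_ ?_ ?_ ?_ ?_
    · rw [← map_mul, ← map_mul, swap_mul_swap_of_ne hac.symm hbc.symm]
    · rw [← map_mul, ← map_mul, swap_comm a c, swap_comm b c,
        swap_mul_swap_of_ne hbc hab.symm, swap_comm c a]
    · rw [← map_mul, ← map_mul, swap_comm a b, swap_mul_swap_of_ne hbc.symm hac.symm]
    · rw [← map_mul, ← map_mul, swap_mul_swap_of_ne hab.symm hbc, swap_comm c b]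
    · -- partial fractions, from `u a - u c = (u a - u b) + (u b - u c)`
      have := sub_ne_zero.2 (hu.ne hab)
      have := sub_ne_zero.2 (hu.ne hac)
      have := sub_ne_zero.2 (hu.ne hbc)
      field_simp
      ring

lemma flatMap_filter_lt_eq_orderedPairs {α : Type*} [LinearOrder α] {l : List α}
    (hl : l.Pairwise (· < ·)) :
    (l.flatMap fun p => (l.filter fun q => p < q).map fun q => (p, q)) = orderedPairs l := by
  induction l with
  | nil => rfl
  | cons x t ih =>
    obtain ⟨hx, ht⟩ := List.pairwise_cons.1 hl
    rw [List.flatMap_cons, orderedPairs, ← ih ht, List.filter_cons_of_neg (by simp),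
      List.filter_eq_self.2 (by simpa using hx)]
    congr 1
    refine List.flatMap_congr fun p hp => ?_
    rw [List.filter_cons_of_neg (by simpa using (hx p hp).le.not_gt)]

lemma lexPairs_eq_orderedPairs (n : ℕ) : lexPairs n = orderedPairs (List.finRange n) :=
  flatMap_filter_lt_eq_orderedPairs (List.pairwise_lt_finRange n)

section PermInvol

variable {n : ℕ}

lemma permInvol_eq_mapDomainLinearEquiv :
    permInvol n = MonoidAlgebra.mapDomainLinearEquiv ℂ ℂ (Equiv.inv (Perm (Fin n))) :=
  rfl

lemma permInvol_single (σ : Perm (Fin n)) (c : ℂ) :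
    permInvol n (MonoidAlgebra.single σ c) = MonoidAlgebra.single σ⁻¹ c := by
  simp [permInvol_eq_mapDomainLinearEquiv]

lemma permInvol_of (σ : Perm (Fin n)) :
    permInvol n (MonoidAlgebra.of ℂ (Perm (Fin n)) σ) = MonoidAlgebra.of ℂ (Perm (Fin n)) σ⁻¹ :=
  permInvol_single σ 1

lemma permInvol_one : permInvol n 1 = 1 := by
  rw [MonoidAlgebra.one_def, permInvol_single, inv_one]

lemma permInvol_mul (x y : MonoidAlgebra ℂ (Perm (Fin n))) :
    permInvol n (x * y) = permInvol n y * permInvol n x := by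
  simp only [permInvol_eq_mapDomainLinearEquiv]
  induction x using MonoidAlgebra.induction_linear with
  | zero => simp
  | add a b ha hb => simp only [add_mul, mul_add, map_add, ha, hb]
  | single σ c =>
    induction y using MonoidAlgebra.induction_linear with
    | zero => simp
    | add a b ha hb => simp only [add_mul, mul_add, map_add, ha, hb]
    | single τ d => simp [MonoidAlgebra.single_mul_single, mul_comm c d]

lemma permInvol_list_prod (l : List (MonoidAlgebra ℂ (Perm (Fin n)))) :
    permInvol n l.prod = (l.map (permInvol n)).reverse.prod := by
  induction l with
  | nil => simpa using permInvol_one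
  | cons x t ih => simp [permInvol_mul, ih]

lemma permInvol_swapFactor (u : Fin n → ℂ) (p q : Fin n) :
    permInvol n (swapFactor u p q) = swapFactor u p q := by
  simp [swapFactor, permInvol_eq_mapDomainLinearEquiv, MonoidAlgebra.one_def]

lemma permInvol_lexProd_swapFactor (u : Fin n → ℂ) (l : List (Fin n)) :
    permInvol n (lexProd (swapFactor u) l) = revLexProd (swapFactor u) l := by
  rw [lexProd, permInvol_list_prod, List.map_map, revLexProd]
  congr 3
  exact funext fun pq => permInvol_swapFactor u pq.1 pq.2

end PermInvol

theorem fusionProd_phi_invariant_general (n : ℕ) (μ : YoungDiagram)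
    (e : Fin n ≃ {c // c ∈ μ.cells})
    (z : Fin n → ℂ)
    (hz : ∀ p q : Fin n, p ≠ q → z p + tabContent e p ≠ z q + tabContent e q) :
    (∀ x y : MonoidAlgebra ℂ (Equiv.Perm (Fin n)),
      permInvol n (x * y) = permInvol n y * permInvol n x) ∧
    (∀ σ : Equiv.Perm (Fin n),
      permInvol n (MonoidAlgebra.of ℂ (Equiv.Perm (Fin n)) σ) =
        MonoidAlgebra.of ℂ (Equiv.Perm (Fin n)) σ⁻¹) ∧
    permInvol n (fusionProd n e z) = fusionProd n e z := by
  refine ⟨permInvol_mul, permInvol_of, ?_⟩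
  set u : Fin n → ℂ := fun p => z p + tabContent e p
  have hu : Injective u := fun p q huv => by_contra fun hpq => hz p q hpq huv
  have hF : fusionProd n e z = lexProd (swapFactor u) (List.finRange n) := by
    rw [fusionProd, lexPairs_eq_orderedPairs]
    rfl
  rw [hF, permInvol_lexProd_swapFactor,
    (isYangBaxter_swapFactor hu).lexProd_eq_revLexProd (List.nodup_finRange n)]

/-- Let `φ` be the `ℂ`-linear antiautomorphism of `ℂ[S_n]` with `φ(σ) = σ⁻¹`.
Then, for a standard tableau `Λ` and any parameters `z` at which the product is
defined, the value of `F_Λ(z₁,…,z_n)` is `φ`-invariant. -/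
theorem fusionProd_phi_invariant (n : ℕ) (μ : YoungDiagram) (hμ : μ.card = n)
    (e : Fin n ≃ {c // c ∈ μ.cells})
    (hrow : ∀ j k : Fin n, ((e j : ℕ × ℕ)).1 = ((e k : ℕ × ℕ)).1 →
      ((e j : ℕ × ℕ)).2 < ((e k : ℕ × ℕ)).2 → j < k)
    (hcol : ∀ j k : Fin n, ((e j : ℕ × ℕ)).2 = ((e k : ℕ × ℕ)).2 →
      ((e j : ℕ × ℕ)).1 < ((e k : ℕ × ℕ)).1 → j < k)
    (z : Fin n → ℂ)
    (hz : ∀ p q : Fin n, p ≠ q → z p + tabContent e p ≠ z q + tabContent e q) :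
    (∀ x y : MonoidAlgebra ℂ (Equiv.Perm (Fin n)),
      permInvol n (x * y) = permInvol n y * permInvol n x) ∧
    (∀ σ : Equiv.Perm (Fin n),
      permInvol n (MonoidAlgebra.of ℂ (Equiv.Perm (Fin n)) σ) =
        MonoidAlgebra.of ℂ (Equiv.Perm (Fin n)) σ⁻¹) ∧
    permInvol n (fusionProd n e z) = fusionProd n e z :=
  fusionProd_phi_invariant_general n μ e z hz
end
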